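/- arXiv:1401.7835 — 7 statements merged into one kernel-verified Lean document; each statement's English description precedes it below -/
import Mathlib

section
/- Let X be a Dedekind complete Riesz space with strong unit e, and let (G, Σ, μ) be as in the context. Let ρ be a finite modular on the space of all functions G → X. Then for every sequence (B_m)_{m∈ℕ} of sets in Σ_b and every (o)-sequence (ε_p)_{p∈ℕ} in ℝ there exists a strictly increasing map p : ℕ → ℕ such that ρ(ε_{p(m)}·e·1_{B_m}) ≤ (1/m)·e for every m ∈ ℕ (m ≥ 1). -/
/-! For each `m`, finiteness bounds `ρ(ε_p · e · 1_{B m})` by `λ_p · u ≤ λ_p c · e`, where `c` comes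
from the strong unit; since `λ_p ↓ 0` this is eventually below `(1/m) · e`. A diagonal extraction
over `m` then gives the strictly increasing `q`. -/

open scoped ENNReal

/-- An `(o)`-sequence in a lattice-ordered group: a decreasing sequence of nonnegative
elements whose infimum is `0`. -/
def IsOSeq {α : Type*} [Lattice α] [AddCommGroup α] (σ : ℕ → α) : Prop :=
  Antitone σ ∧ (∀ p, 0 ≤ σ p) ∧ IsGLB (Set.range σ) 0

open Filter

theorem IsOSeq.eventually_lt {σ : ℕ → ℝ} (hσ : IsOSeq σ) {δ : ℝ} (hδ : 0 < δ) :
    ∀ᶠ p in atTop, σ p < δ := by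
  obtain ⟨_, ⟨N, rfl⟩, -, hN⟩ := hσ.2.2.exists_between hδ
  exact eventually_atTop.2 ⟨N, fun p hp => (hσ.1 hp).trans_lt hN⟩

theorem IsOSeq.eventually_smul_le {X : Type*} [Lattice X] [AddCommGroup X]
    [CovariantClass X X (· + ·) (· ≤ ·)] [Module ℝ X] [PosSMulMono ℝ X]
    {lam : ℕ → ℝ} (hlam : IsOSeq lam) {u e : X} {c δ : ℝ} (hu : 0 ≤ u) (hc : 0 < c)
    (hue : |u| ≤ c • e) (hδ : 0 < δ) :
    ∀ᶠ p in atTop, lam p • u ≤ δ • e := by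
  have hu_le : u ≤ c • e := (le_abs_self u).trans hue
  filter_upwards [hlam.eventually_lt (div_pos hδ hc)] with p hp
  calc lam p • u ≤ lam p • (c • e) := smul_le_smul_of_nonneg_left hu_le (hlam.2.1 p)
    _ ≤ (δ / c) • (c • e) := by
      rw [← sub_nonneg, ← sub_smul]
      exact smul_nonneg (sub_nonneg.2 hp.le) (hu.trans hu_le)
    _ = δ • e := by rw [smul_smul, div_mul_cancel₀ δ hc.ne']

theorem finite_modular_diagonal_general
    {X G : Type*} [Lattice X] [AddCommGroup X]
    [CovariantClass X X (· + ·) (· ≤ ·)] [Module ℝ X] [PosSMulMono ℝ X]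
    [MeasurableSpace G]
    -- strong unit e
    (e : X) (hstrong : ∀ x : X, ∃ c : ℝ, 0 < c ∧ |x| ≤ c • e)
    -- finitely additive measure μ : Σ → [0,∞]
    (μ : Set G → ℝ≥0∞)
    -- a modular ρ on the space of all functions G → X
    (ρ : (G → X) → WithTop X)
    -- ρ is finite
    (hfin : ∀ A : Set G, MeasurableSet A → μ A < ⊤ → ∀ ε : ℕ → ℝ, IsOSeq ε →
      ∃ u : X, 0 ≤ u ∧ ∃ lam : ℕ → ℝ, IsOSeq lam ∧
        ∀ p : ℕ, ρ (Set.indicator A fun _ => ε p • e) ≤ ((lam p • u : X) : WithTop X))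
    -- data: a sequence in Σ_b and an (o)-sequence in ℝ
    (B : ℕ → Set G) (hB : ∀ m, MeasurableSet (B m) ∧ μ (B m) < ⊤)
    (ε : ℕ → ℝ) (hε : IsOSeq ε) :
    ∃ q : ℕ → ℕ, StrictMono q ∧
      ∀ m : ℕ, 1 ≤ m →
        ρ (Set.indicator (B m) fun _ => ε (q m) • e) ≤ (((m : ℝ)⁻¹ • e : X) : WithTop X) := by
  suffices hsmall : ∀ m, ∀ᶠ p in atTop, 1 ≤ m →
      ρ (Set.indicator (B m) fun _ => ε p • e) ≤ (((m : ℝ)⁻¹ • e : X) : WithTop X) from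
    extraction_forall_of_eventually hsmall
  refine fun m => eventually_imp_distrib_left.2 fun hm => ?_
  obtain ⟨u, hu, lam, hlam, hρ⟩ := hfin (B m) (hB m).1 (hB m).2 ε hε
  obtain ⟨c, hc, hue⟩ := hstrong u
  filter_upwards [hlam.eventually_smul_le hu hc hue (inv_pos.2 (Nat.cast_pos.2 hm))] with p hp
  exact (hρ p).trans (WithTop.coe_le_coe.2 hp)

/-- **Proposition (finiteness of modulars).**
Let `X` be a Dedekind complete Riesz space with strong unit `e`, `(G, Σ, μ)` a set with a
σ-algebra and a finitely additive `[0,∞]`-valued measure, and `ρ` a finite modular on `X^G`.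
Then for every sequence `(B m)` in `Σ_b` and every `(o)`-sequence `(ε p)` in `ℝ` there is a
strictly increasing map `q : ℕ → ℕ` with `ρ(ε (q m) • e • 1_{B m}) ≤ (1/m) • e` for all
`m ≥ 1`. -/
theorem finite_modular_diagonal
    {X G : Type*} [Lattice X] [AddCommGroup X]
    [CovariantClass X X (· + ·) (· ≤ ·)] [Module ℝ X] [PosSMulMono ℝ X]
    [MeasurableSpace G]
    -- Dedekind completeness of X
    (hDC : ∀ S : Set X, S.Nonempty → BddAbove S → ∃ x, IsLUB S x)
    -- strong unit e
    (e : X) (he : 0 < e) (hstrong : ∀ x : X, ∃ c : ℝ, 0 < c ∧ |x| ≤ c • e)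
    -- finitely additive measure μ : Σ → [0,∞]
    (μ : Set G → ℝ≥0∞) (hμ0 : μ ∅ = 0)
    (hμadd : ∀ A B : Set G, MeasurableSet A → MeasurableSet B → Disjoint A B →
      μ (A ∪ B) = μ A + μ B)
    -- a modular ρ on the space of all functions G → X
    (ρ : (G → X) → WithTop X)
    (hρ0 : ρ 0 = 0)
    (hρpos : ∀ f : G → X, 0 ≤ ρ f)
    (hρneg : ∀ f : G → X, ρ (-f) = ρ f)
    (hρconv : ∀ f h : G → X, ∀ α₁ α₂ : ℝ, 0 ≤ α₁ → 0 ≤ α₂ → α₁ + α₂ = 1 →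
      ρ (α₁ • f + α₂ • h) ≤ ρ f + ρ h)
    -- ρ is finite
    (hfin : ∀ A : Set G, MeasurableSet A → μ A < ⊤ → ∀ ε : ℕ → ℝ, IsOSeq ε →
      ∃ u : X, 0 ≤ u ∧ ∃ lam : ℕ → ℝ, IsOSeq lam ∧
        ∀ p : ℕ, ρ (Set.indicator A fun _ => ε p • e) ≤ ((lam p • u : X) : WithTop X))
    -- data: a sequence in Σ_b and an (o)-sequence in ℝ
    (B : ℕ → Set G) (hB : ∀ m, MeasurableSet (B m) ∧ μ (B m) < ⊤)
    (ε : ℕ → ℝ) (hε : IsOSeq ε) :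
    ∃ q : ℕ → ℕ, StrictMono q ∧
      ∀ m : ℕ, 1 ≤ m →
        ρ (Set.indicator (B m) fun _ => ε (q m) • e) ≤ (((m : ℝ)⁻¹ • e : X) : WithTop X) :=
  finite_modular_diagonal_general e hstrong μ ρ hfin B hB ε hε
end

section
/- (Vitali-type theorem.) Let X be a Dedekind complete Riesz space with strong unit e, let (G, Σ, μ) be as in the context, let ρ be a monotone finite modular on the space of all functions G → X, and let F be a free filter on ℕ. If (f_z)_{z∈ℕ}, f_z : G → X, μ-converges to 0 (relative to F) and is equi-absolutely continuous with respect to ρ and F, then there exists a real α > 0 such that (ρ(α·f_z))_{z∈ℕ} (o_F)-converges to 0, i.e. there is an (o)-sequence (σ_p) in X with {z ∈ ℕ : ρ(α·f_z) ≤ σ_p} ∈ F for every p. -/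
/-!
Split `α f_z / 3` along the exceptional set `A` of the `μ`-convergence and a set `B_m` of finite
measure from the second equi-absolute-continuity condition; convexity of `ρ` gives
`ρ(α f_z / 3) ≤ ρ(α f_z 1_A) + ρ(α f_z 1_{B_m ∖ A}) + ρ(α f_z 1_{B_mᶜ ∖ A})`.
The first term is small by the first equi-absolute-continuity condition, the second is dominated
by `ρ(α ε_p e 1_{B_m})`, which is small by finiteness of `ρ`, and the third by the second
condition. So `ρ(α f_z / 3) ≤ w_p + λ^m_p u_m + r_m` for `F`-almost all `z`, and the infima of
these bounds over `p, m ≤ n` form an `(o)`-sequence because Dedekind completeness makes `X`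
Archimedean.
-/

open scoped ENNReal

/-- The sequence `f z : G → X` `μ`-converges to `g : G → X` relative to the filter `F`. -/
def MuConv {X G : Type*} [Lattice X] [AddCommGroup X] [Module ℝ X] [MeasurableSpace G]
    (μ : Set G → ℝ≥0∞) (F : Filter ℕ) (e : X) (f : ℕ → G → X) (g : G → X) : Prop :=
  ∃ ε : ℕ → ℝ, IsOSeq ε ∧ ∃ σ : ℕ → ℝ, IsOSeq σ ∧
    ∃ A : ℕ → ℕ → Set G, (∀ z p, MeasurableSet (A z p)) ∧
      (∀ z p, {t : G | ¬ |f z t - g t| ≤ ε p • e} ⊆ A z p) ∧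
      (∀ p, {z : ℕ | μ (A z p) ≤ ENNReal.ofReal (σ p)} ∈ F)

/-- The sequence `f z : G → X` is `ρ`-`F`-equi-absolutely continuous. -/
def EquiAC {X G : Type*} [Lattice X] [AddCommGroup X] [Module ℝ X] [MeasurableSpace G]
    (μ : Set G → ℝ≥0∞) (F : Filter ℕ) (ρ : (G → X) → WithTop X) (f : ℕ → G → X) : Prop :=
  ∃ α : ℝ, 0 < α ∧
    (∀ σ : ℕ → ℝ, IsOSeq σ → ∃ w : ℕ → X, IsOSeq w ∧ ∃ Ξ : ℕ → Set ℕ,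
      (∀ p, Ξ p ∈ F) ∧
      ∀ p : ℕ, ∀ z ∈ Ξ p, ∀ B : Set G, MeasurableSet B → μ B ≤ ENNReal.ofReal (σ p) →
        ρ (Set.indicator B fun t => α • f z t) ≤ ((w p : X) : WithTop X)) ∧
    (∃ r : ℕ → X, IsOSeq r ∧ ∃ B : ℕ → Set G, (∀ m, MeasurableSet (B m) ∧ μ (B m) < ⊤) ∧
      ∀ m : ℕ,
        {z : ℕ | ρ (Set.indicator (B m)ᶜ fun t => α • f z t) ≤ ((r m : X) : WithTop X)} ∈ F)

open Set

theorem IsOSeq.le_zero_of_forall_le {α : Type*} [Lattice α] [AddCommGroup α] {σ : ℕ → α}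
    (hσ : IsOSeq σ) {b : α} (h : ∀ p, b ≤ σ p) : b ≤ 0 :=
  hσ.2.2.2 <| by rintro _ ⟨p, rfl⟩; exact h p

theorem IsOSeq.const_mul {ε : ℕ → ℝ} (hε : IsOSeq ε) {c : ℝ} (hc : 0 < c) :
    IsOSeq fun p => c * ε p := by
  refine ⟨hε.1.const_mul hc.le, fun p => mul_nonneg hc.le (hε.2.1 p), ?_⟩
  simpa [← Function.comp_def, Set.range_comp] using hε.2.2.mul_left hc.le

theorem abs_smul_le_smul_of_abs_le {X : Type*} [Lattice X] [AddCommGroup X] [Module ℝ X]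
    [PosSMulMono ℝ X] {a : ℝ} (ha : 0 ≤ a) {x c : X} (h : |x| ≤ c) : |a • x| ≤ a • c := by
  refine abs_le'.2 ⟨smul_le_smul_of_nonneg_left ((le_abs_self x).trans h) ha, ?_⟩
  rw [← smul_neg]
  exact smul_le_smul_of_nonneg_left ((neg_le_abs x).trans h) ha

section DedekindComplete

variable {X : Type*} [Lattice X] [AddCommGroup X] [IsOrderedAddMonoid X]

/-- The supremum `s` of the multiples of `c` satisfies `s + c ≤ s`. -/
theorem le_zero_of_forall_nsmul_le
    (hDC : ∀ S : Set X, S.Nonempty → BddAbove S → ∃ x, IsLUB S x) {c u : X}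
    (h : ∀ n : ℕ, n • c ≤ u) : c ≤ 0 := by
  obtain ⟨s, hs⟩ := hDC (range fun n : ℕ => n • c) ⟨_, mem_range_self 0⟩
    ⟨u, by rintro _ ⟨n, rfl⟩; exact h n⟩
  have hsc : s + c ≤ s := by
    refine add_le_of_le_sub_right (hs.2 ?_)
    rintro _ ⟨n, rfl⟩
    refine le_sub_iff_add_le.2 ?_
    simpa [succ_nsmul] using hs.1 (mem_range_self (n + 1))
  simpa using hsc

variable [Module ℝ X] [PosSMulMono ℝ X]

theorem IsOSeq.le_zero_of_forall_le_smul
    (hDC : ∀ S : Set X, S.Nonempty → BddAbove S → ∃ x, IsLUB S x)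
    {lam : ℕ → ℝ} (hlam : IsOSeq lam) {u b : X} (hu : 0 ≤ u)
    (h : ∀ p, b ≤ lam p • u) : b ≤ 0 := by
  refine le_sup_left.trans (le_zero_of_forall_nsmul_le hDC (c := b ⊔ 0) (u := u) fun n => ?_)
  rw [← Nat.cast_smul_eq_nsmul ℝ]
  obtain ⟨_, ⟨p, rfl⟩, -, hp⟩ :=
    hlam.2.2.exists_between (by positivity : (0 : ℝ) < 1 / (n + 1))
  have hnp : (n : ℝ) * lam p ≤ 1 := by
    rw [lt_div_iff₀ (by positivity)] at hp
    nlinarith [hlam.2.1 p]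
  calc (n : ℝ) • (b ⊔ 0) ≤ (n : ℝ) • (lam p • u) :=
        smul_le_smul_of_nonneg_left (sup_le (h p) (smul_nonneg (hlam.2.1 p) hu)) n.cast_nonneg
    _ = ((n : ℝ) * lam p) • u := smul_smul _ _ _
    _ ≤ (1 : ℝ) • u := smul_le_smul_of_nonneg_right hnp hu
    _ = u := one_smul _ _

theorem IsOSeq.le_zero_of_forall_le_add_smul
    (hDC : ∀ S : Set X, S.Nonempty → BddAbove S → ∃ x, IsLUB S x)
    {w : ℕ → X} (hw : IsOSeq w) {lam : ℕ → ℝ} (hlam : IsOSeq lam) {u b : X} (hu : 0 ≤ u)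
    (h : ∀ p, b ≤ w p + lam p • u) : b ≤ 0 := by
  refine hlam.le_zero_of_forall_le_smul hDC hu fun q =>
    sub_nonpos.1 <| hw.le_zero_of_forall_le fun p => ?_
  calc b - lam q • u ≤ w (max p q) + lam (max p q) • u - lam q • u :=
        sub_le_sub_right (h _) _
    _ ≤ w p + lam q • u - lam q • u := by
        gcongr
        · exact hw.1 (le_max_left p q)
        · exact hlam.1 (le_max_right p q)
    _ = w p := add_sub_cancel_right _ _

end DedekindComplete

section Indicator

variable {G X : Type*} [Lattice X] [AddCommGroup X] [IsOrderedAddMonoid X]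

theorem abs_indicator_le_abs_indicator {S T : Set G} (hST : S ⊆ T) {g h : G → X}
    (hgh : ∀ t ∈ S, |g t| ≤ |h t|) (t : G) : |S.indicator g t| ≤ |T.indicator h t| := by
  by_cases ht : t ∈ S
  · simpa [ht, hST ht] using hgh t ht
  · rw [indicator_of_notMem ht, abs_zero]
    exact abs_nonneg _

theorem indicator_add_indicator_diff_add_indicator_compl_diff {M : Type*} [AddMonoid M]
    (g : G → M) (A B : Set G) :
    A.indicator g + (B \ A).indicator g + (Bᶜ \ A).indicator g = g := by
  ext t
  by_cases hA : t ∈ A <;> by_cases hB : t ∈ B <;> simp [hA, hB]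

end Indicator

section Modular

variable {G X : Type*} [Lattice X] [AddCommGroup X] [IsOrderedAddMonoid X] [Module ℝ X]
  {ρ : (G → X) → WithTop X}

theorem modular_third_smul_add_add_le
    (hρconv : ∀ f h : G → X, ∀ α₁ α₂ : ℝ, 0 ≤ α₁ → 0 ≤ α₂ → α₁ + α₂ = 1 →
      ρ (α₁ • f + α₂ • h) ≤ ρ f + ρ h) (g₁ g₂ g₃ : G → X) :
    ρ ((1 / 3 : ℝ) • (g₁ + g₂ + g₃)) ≤ ρ g₁ + ρ g₂ + ρ g₃ := by
  have hsplit : (1 / 3 : ℝ) • (g₁ + g₂ + g₃) =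
      (1 / 3 : ℝ) • g₁ + (2 / 3 : ℝ) • ((1 / 2 : ℝ) • g₂ + (1 / 2 : ℝ) • g₃) := by
    simp only [smul_add, smul_smul, add_assoc]; norm_num
  rw [hsplit, add_assoc]
  exact (hρconv _ _ (1 / 3) (2 / 3) (by norm_num) (by norm_num) (by norm_num)).trans
    (add_le_add le_rfl (hρconv _ _ (1 / 2) (1 / 2) (by norm_num) (by norm_num) (by norm_num)))

theorem modular_third_smul_le
    (hρconv : ∀ f h : G → X, ∀ α₁ α₂ : ℝ, 0 ≤ α₁ → 0 ≤ α₂ → α₁ + α₂ = 1 →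
      ρ (α₁ • f + α₂ • h) ≤ ρ f + ρ h)
    (hρmono : ∀ f h : G → X, (∀ t, |f t| ≤ |h t|) → ρ f ≤ ρ h)
    {g : G → X} {A B : Set G} {c : X} (hgc : ∀ t ∉ A, |g t| ≤ c) :
    ρ ((1 / 3 : ℝ) • g) ≤
      ρ (A.indicator g) + ρ (B.indicator fun _ => c) + ρ (Bᶜ.indicator g) := by
  conv_lhs => rw [← indicator_add_indicator_diff_add_indicator_compl_diff g A B]
  refine (modular_third_smul_add_add_le hρconv _ _ _).trans
    (add_le_add (add_le_add le_rfl ?_) ?_)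
  · exact hρmono _ _ <| abs_indicator_le_abs_indicator sdiff_subset fun t ht =>
      (hgc t ht.2).trans (le_abs_self c)
  · exact hρmono _ _ <| abs_indicator_le_abs_indicator sdiff_subset fun _ _ => le_rfl

end Modular

section FiniteInf

variable {X : Type*} [Lattice X]

def infIic (τ : ℕ × ℕ → X) (n : ℕ) : X :=
  (Finset.Iic (n, n)).inf' Finset.nonempty_Iic τ

theorem infIic_le (τ : ℕ × ℕ → X) (p m : ℕ) : infIic τ (max p m) ≤ τ (p, m) :=
  Finset.inf'_le _ (Finset.mem_Iic.2 (Prod.mk_le_mk.2 ⟨le_max_left p m, le_max_right p m⟩))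

theorem isOSeq_infIic [AddCommGroup X] {τ : ℕ × ℕ → X} (hτ : ∀ pm, 0 ≤ τ pm)
    (hglb : ∀ b, (∀ p m, b ≤ τ (p, m)) → b ≤ 0) : IsOSeq (infIic τ) := by
  have hnonneg : ∀ n, 0 ≤ infIic τ n := fun n => Finset.le_inf' _ _ fun pm _ => hτ pm
  refine ⟨fun n n' hnn' => ?_, hnonneg, ?_, fun b hb => ?_⟩
  · exact Finset.le_inf' _ _ fun pm hpm => Finset.inf'_le _ <|
      Finset.mem_Iic.2 ((Finset.mem_Iic.1 hpm).trans (Prod.mk_le_mk.2 ⟨hnn', hnn'⟩))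
  · rintro _ ⟨n, rfl⟩; exact hnonneg n
  · exact hglb b fun p m => (hb ⟨_, rfl⟩).trans (infIic_le τ p m)

theorem eventually_le_infIic {ι : Type*} {F : Filter ι} {x : ι → WithTop X} {τ : ℕ × ℕ → X}
    (h : ∀ p m, ∀ᶠ z in F, x z ≤ τ (p, m)) (n : ℕ) : ∀ᶠ z in F, x z ≤ infIic τ n := by
  have hall : ∀ᶠ z in F, ∀ pm ∈ Finset.Iic (n, n), x z ≤ τ pm :=
    (Finset.Iic (n, n)).eventually_all.2 fun pm _ => h pm.1 pm.2
  filter_upwards [hall] with z hz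
  rw [infIic, Finset.coe_inf']
  exact Finset.le_inf hz

end FiniteInf

theorem vitali_modular_general
    {X G : Type*} [Lattice X] [AddCommGroup X]
    [CovariantClass X X (· + ·) (· ≤ ·)] [Module ℝ X] [PosSMulMono ℝ X]
    [MeasurableSpace G]
    -- Dedekind completeness of X
    (hDC : ∀ S : Set X, S.Nonempty → BddAbove S → ∃ x, IsLUB S x)
    -- strong unit e
    (e : X)
    -- finitely additive measure μ : Σ → [0,∞]
    (μ : Set G → ℝ≥0∞)
    -- a modular ρ on the space of all functions G → X
    (ρ : (G → X) → WithTop X)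
    (hρconv : ∀ f h : G → X, ∀ α₁ α₂ : ℝ, 0 ≤ α₁ → 0 ≤ α₂ → α₁ + α₂ = 1 →
      ρ (α₁ • f + α₂ • h) ≤ ρ f + ρ h)
    -- ρ is monotone
    (hρmono : ∀ f h : G → X, (∀ t, |f t| ≤ |h t|) → ρ f ≤ ρ h)
    -- ρ is finite
    (hfin : ∀ A : Set G, MeasurableSet A → μ A < ⊤ → ∀ ε : ℕ → ℝ, IsOSeq ε →
      ∃ u : X, 0 ≤ u ∧ ∃ lam : ℕ → ℝ, IsOSeq lam ∧
        ∀ p : ℕ, ρ (Set.indicator A fun _ => ε p • e) ≤ ((lam p • u : X) : WithTop X))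
    -- F is a free filter on ℕ
    (F : Filter ℕ)
    -- the sequence (f z)
    (f : ℕ → G → X)
    (hconv : MuConv μ F e f 0)
    (hEAC : EquiAC μ F ρ f) :
    ∃ α : ℝ, 0 < α ∧ ∃ σ : ℕ → X, IsOSeq σ ∧
      ∀ p : ℕ, {z : ℕ | ρ (α • f z) ≤ ((σ p : X) : WithTop X)} ∈ F := by
  have : IsOrderedAddMonoid X :=
    ⟨fun _ _ h c => add_le_add_left h c, fun _ _ h c => add_le_add_right h c⟩
  obtain ⟨ε, hε, σ, hσ, A, hAmeas, hAε, hAF⟩ := hconv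
  obtain ⟨α, hα, hAC, r, hr, B, hB, hBF⟩ := hEAC
  obtain ⟨w, hw, Ξ, hΞF, hΞ⟩ := hAC σ hσ
  choose u hu lam hlam hρB using fun m => hfin (B m) (hB m).1 (hB m).2 _ (hε.const_mul hα)
  set τ : ℕ × ℕ → X := fun pm => w pm.1 + lam pm.2 pm.1 • u pm.2 + r pm.2
  refine ⟨α / 3, by positivity, infIic τ, isOSeq_infIic (fun pm => ?_) (fun b hb => ?_),
    eventually_le_infIic fun p m => ?_⟩
  · exact add_nonneg (add_nonneg (hw.2.1 _) (smul_nonneg ((hlam _).2.1 _) (hu _))) (hr.2.1 _)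
  · exact hr.le_zero_of_forall_le fun m => sub_nonpos.1 <| hw.le_zero_of_forall_le_add_smul hDC
      (hlam m) (hu m) fun p => sub_le_iff_le_add.2 (hb p m)
  filter_upwards [hAF p, hΞF p, hBF m] with z hzA hzΞ hzB
  have hsmall : ∀ t ∉ A z p, |(α • f z) t| ≤ (α * ε p) • e := fun t ht => by
    have hft : |f z t| ≤ ε p • e := by simpa using not_not.1 fun h => ht (hAε z p h)
    exact (abs_smul_le_smul_of_abs_le hα.le hft).trans_eq (smul_smul _ _ _)
  calc ρ ((α / 3) • f z) = ρ ((1 / 3 : ℝ) • α • f z) := by rw [smul_smul, one_div_mul_eq_div]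
    _ ≤ ρ ((A z p).indicator (α • f z)) + ρ ((B m).indicator fun _ => (α * ε p) • e)
        + ρ ((B m)ᶜ.indicator (α • f z)) := modular_third_smul_le hρconv hρmono hsmall
    _ ≤ ↑(w p) + ↑(lam m p • u m) + ↑(r m) :=
        add_le_add (add_le_add (hΞ p z hzΞ _ (hAmeas z p) hzA) (hρB m p)) hzB
    _ = ↑(τ (p, m)) := by simp [τ]

/-- **Vitali-type theorem.** Let `X` be a Dedekind complete Riesz space with strong unit `e`,
`ρ` a monotone finite modular on `X^G`, and `F` a free filter on `ℕ`. If `(f z)` `μ`-converges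
to `0` and is equi-absolutely continuous, then there is `α > 0` such that `(ρ (α • f z))`
`(o_F)`-converges to `0`. -/
theorem vitali_modular
    {X G : Type*} [Lattice X] [AddCommGroup X]
    [CovariantClass X X (· + ·) (· ≤ ·)] [Module ℝ X] [PosSMulMono ℝ X]
    [MeasurableSpace G]
    -- Dedekind completeness of X
    (hDC : ∀ S : Set X, S.Nonempty → BddAbove S → ∃ x, IsLUB S x)
    -- strong unit e
    (e : X) (he : 0 < e) (hstrong : ∀ x : X, ∃ c : ℝ, 0 < c ∧ |x| ≤ c • e)
    -- finitely additive measure μ : Σ → [0,∞]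
    (μ : Set G → ℝ≥0∞) (hμ0 : μ ∅ = 0)
    (hμadd : ∀ A B : Set G, MeasurableSet A → MeasurableSet B → Disjoint A B →
      μ (A ∪ B) = μ A + μ B)
    -- a modular ρ on the space of all functions G → X
    (ρ : (G → X) → WithTop X)
    (hρ0 : ρ 0 = 0)
    (hρpos : ∀ f : G → X, 0 ≤ ρ f)
    (hρneg : ∀ f : G → X, ρ (-f) = ρ f)
    (hρconv : ∀ f h : G → X, ∀ α₁ α₂ : ℝ, 0 ≤ α₁ → 0 ≤ α₂ → α₁ + α₂ = 1 →
      ρ (α₁ • f + α₂ • h) ≤ ρ f + ρ h)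
    -- ρ is monotone
    (hρmono : ∀ f h : G → X, (∀ t, |f t| ≤ |h t|) → ρ f ≤ ρ h)
    -- ρ is finite
    (hfin : ∀ A : Set G, MeasurableSet A → μ A < ⊤ → ∀ ε : ℕ → ℝ, IsOSeq ε →
      ∃ u : X, 0 ≤ u ∧ ∃ lam : ℕ → ℝ, IsOSeq lam ∧
        ∀ p : ℕ, ρ (Set.indicator A fun _ => ε p • e) ≤ ((lam p • u : X) : WithTop X))
    -- F is a free filter on ℕ
    (F : Filter ℕ) (hFproper : F.NeBot) (hFfree : F ≤ Filter.cofinite)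
    -- the sequence (f z)
    (f : ℕ → G → X)
    (hconv : MuConv μ F e f 0)
    (hEAC : EquiAC μ F ρ f) :
    ∃ α : ℝ, 0 < α ∧ ∃ σ : ℕ → X, IsOSeq σ ∧
      ∀ p : ℕ, {z : ℕ | ρ (α • f z) ≤ ((σ p : X) : WithTop X)} ∈ F :=
  vitali_modular_general hDC e μ ρ hρconv hρmono hfin F f hconv hEAC
end

section
/- Let 1 < a < b be reals and let f : ℝ → ℝ be a bounded measurable function vanishing outside [a,b]. Then for every integer n ≥ 2 the function T_n f : (0,∞) → ℝ is Lipschitz on (0,∞) (there is L > 0 with |T_n f(s₁) − T_n f(s₂)| ≤ L·|s₁ − s₂| for all s₁, s₂ > 0) and Lebesgue integrable on (0,∞), i.e. ∫₀^{+∞} |T_n f(s)| ds < +∞. -/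
/-! Write `T_n f (s) = (n / sⁿ) F(s)` with `F(s) = ∫₀ˢ t^{n-1} f(t) dt`. The integrand is
bounded and integrable, so `F` is Lipschitz and bounded by `∫ |t^{n-1} f(t)| dt`; on `[1, ∞)`
the factor `n / sⁿ` is bounded and Lipschitz too, hence so is the product. As `f` vanishes below
`a ≥ 1`, `T_n f` vanishes on `(0, a]`, so `T_n f (s) = T_n f (max s a)` carries the bound over
to `(0, ∞)`. For integrability, `T_n f = 0` on `(0, a]` and `|T_n f (s)| ≤ n sup |F| · s^{-n}`
on `(a, ∞)`, which is integrable because `n ≥ 2`. -/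

open MeasureTheory

/-- The `n`-th moment operator: `T_n f (s) = (n / sⁿ) ∫₀ˢ t^{n-1} f(t) dt`. -/
noncomputable def momentOp (n : ℕ) (f : ℝ → ℝ) (s : ℝ) : ℝ :=
  ((n : ℝ) / s ^ n) * ∫ t in (0 : ℝ)..s, t ^ (n - 1) * f t

open Set
open scoped NNReal

theorem LipschitzOnWith.mul_of_norm_le {α R : Type*} [PseudoMetricSpace α] [SeminormedRing R]
    {u v : α → R} {s : Set α} {Ku Kv : ℝ≥0} {A B : ℝ}
    (hu : LipschitzOnWith Ku u s) (hv : LipschitzOnWith Kv v s)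
    (hA : ∀ x ∈ s, ‖u x‖ ≤ A) (hB : ∀ x ∈ s, ‖v x‖ ≤ B) :
    LipschitzOnWith (A * Kv + B * Ku).toNNReal (fun x => u x * v x) s := by
  refine LipschitzOnWith.of_dist_le' fun x hx y hy => ?_
  have hA0 : 0 ≤ A := (norm_nonneg _).trans (hA x hx)
  rw [dist_eq_norm, show u x * v x - u y * v y = u x * (v x - v y) + (u x - u y) * v y by
    noncomm_ring]
  calc ‖u x * (v x - v y) + (u x - u y) * v y‖
      ≤ ‖u x‖ * ‖v x - v y‖ + ‖u x - u y‖ * ‖v y‖ :=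
        (norm_add_le _ _).trans (add_le_add (norm_mul_le _ _) (norm_mul_le _ _))
    _ ≤ A * (Kv * dist x y) + Ku * dist x y * B := by
        rw [← dist_eq_norm, ← dist_eq_norm]
        gcongr
        exacts [hA x hx, hv.dist_le_mul x hx y hy, hu.dist_le_mul x hx y hy, hB y hy]
    _ = (A * Kv + B * Ku) * dist x y := by ring

theorem abs_inv_pow_sub_inv_pow_le {x y : ℝ} (hx : 1 ≤ x) (hy : 1 ≤ y) (n : ℕ) :
    |(x ^ n)⁻¹ - (y ^ n)⁻¹| ≤ n * |x - y| := by
  have hxn : 0 < x ^ n := by positivity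
  have hyn : 0 < y ^ n := by positivity
  rw [inv_sub_inv hxn.ne' hyn.ne', abs_div, abs_of_pos (mul_pos hxn hyn),
    div_le_iff₀ (mul_pos hxn hyn)]
  have hmax : max |y| |x| ^ (n - 1) ≤ x ^ n * y ^ n := by
    rw [abs_of_nonneg (by linarith), abs_of_nonneg (by linarith)]
    rcases max_choice y x with h | h <;> rw [h]
    · exact (pow_le_pow_right₀ hy (n.sub_le 1)).trans
        (le_mul_of_one_le_left hyn.le (one_le_pow₀ hx))
    · exact (pow_le_pow_right₀ hx (n.sub_le 1)).trans
        (le_mul_of_one_le_right hxn.le (one_le_pow₀ hy))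
  calc |y ^ n - x ^ n| ≤ |y - x| * n * max |y| |x| ^ (n - 1) := abs_pow_sub_pow_le ..
    _ ≤ |y - x| * n * (x ^ n * y ^ n) := by gcongr
    _ = n * |x - y| * (x ^ n * y ^ n) := by rw [abs_sub_comm]; ring

theorem lipschitzOnWith_natCast_div_pow (n : ℕ) :
    LipschitzOnWith (n * n : ℝ).toNNReal (fun s : ℝ => (n : ℝ) / s ^ n) (Ici 1) := by
  refine LipschitzOnWith.of_dist_le' fun x hx y hy => ?_
  simp only [Real.dist_eq, div_eq_mul_inv, ← mul_sub, abs_mul, Nat.abs_cast, mul_assoc]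
  gcongr
  exact abs_inv_pow_sub_inv_pow_le hx hy n

theorem abs_natCast_div_pow_le {s : ℝ} (hs : 1 ≤ s) (n : ℕ) : |(n : ℝ) / s ^ n| ≤ n := by
  rw [abs_of_nonneg (by positivity)]
  exact div_le_self n.cast_nonneg (one_le_pow₀ hs)

section Primitive

variable {E : Type*} [NormedAddCommGroup E] [NormedSpace ℝ E] {g : ℝ → E}

theorem lipschitzWith_primitive {K : ℝ≥0} (hg : LocallyIntegrable g)
    (hK : ∀ t, ‖g t‖ ≤ K) (c : ℝ) : LipschitzWith K fun s => ∫ t in c..s, g t := by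
  refine LipschitzWith.of_dist_le_mul fun x y => ?_
  have hg' (u v : ℝ) : IntervalIntegrable g volume u v :=
    (hg.integrableOn_isCompact isCompact_uIcc).intervalIntegrable
  rw [dist_eq_norm, intervalIntegral.integral_interval_sub_left (hg' c x) (hg' c y),
    Real.dist_eq]
  exact intervalIntegral.norm_integral_le_of_norm_le_const fun t _ => hK t

theorem norm_intervalIntegral_le_integral_norm (hg : Integrable g) (c s : ℝ) :
    ‖∫ t in c..s, g t‖ ≤ ∫ t, ‖g t‖ :=
  intervalIntegral.norm_integral_le_integral_norm_uIoc.trans <|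
    setIntegral_le_integral hg.norm (.of_forall fun _ => norm_nonneg _)

theorem intervalIntegral_eq_zero_of_forall_lt {a s : ℝ} (hg : ∀ t < a, g t = 0) (hs : 0 ≤ s)
    (hsa : s ≤ a) : ∫ t in (0 : ℝ)..s, g t = 0 := by
  rw [intervalIntegral.integral_of_le hs, integral_Ioc_eq_integral_Ioo]
  exact setIntegral_eq_zero_of_forall_eq_zero fun t ht => hg t (ht.2.trans_le hsa)

end Primitive

section MomentOp

variable {f : ℝ → ℝ} {a b M : ℝ} {n : ℕ}

theorem norm_pow_mul_le (ha : 0 ≤ a) (hM : ∀ t, |f t| ≤ M)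
    (hf : Function.support f ⊆ Icc a b) (t : ℝ) : ‖t ^ (n - 1) * f t‖ ≤ |b| ^ (n - 1) * M := by
  have hM0 : 0 ≤ M := (abs_nonneg _).trans (hM t)
  by_cases ht : t ∈ Icc a b
  · rw [norm_mul, norm_pow, Real.norm_eq_abs, Real.norm_eq_abs]
    have hbt : |t| ≤ |b| := abs_le_abs_of_nonneg (ha.trans ht.1) ht.2
    exact mul_le_mul (pow_le_pow_left₀ (abs_nonneg _) hbt _) (hM t) (abs_nonneg _) (by positivity)
  · rw [Function.notMem_support.1 (mt (@hf t) ht), mul_zero, norm_zero]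
    positivity

theorem integrable_pow_mul (ha : 0 ≤ a) (hmeas : Measurable f) (hM : ∀ t, |f t| ≤ M)
    (hf : Function.support f ⊆ Icc a b) : Integrable fun t => t ^ (n - 1) * f t := by
  refine (integrableOn_iff_integrable_of_support_subset
    ((Function.support_mul_subset_right _ _).trans hf)).1 ?_
  exact Measure.integrableOn_of_bounded measure_Icc_lt_top.ne
    ((measurable_id.pow_const _).mul hmeas).aestronglyMeasurable
    (.of_forall (norm_pow_mul_le ha hM hf))

theorem momentOp_eq_zero_of_le (hf : ∀ t < a, f t = 0) {s : ℝ} (hs : 0 ≤ s) (hsa : s ≤ a) :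
    momentOp n f s = 0 := by
  rw [momentOp, intervalIntegral_eq_zero_of_forall_lt (fun t ht => by rw [hf t ht, mul_zero])
    hs hsa, mul_zero]

theorem momentOp_max_eq (hf : ∀ t < a, f t = 0) (ha : 0 ≤ a) {s : ℝ} (hs : 0 ≤ s) :
    momentOp n f (max s a) = momentOp n f s := by
  rcases le_total s a with hsa | has
  · rw [max_eq_right hsa, momentOp_eq_zero_of_le hf ha le_rfl, momentOp_eq_zero_of_le hf hs hsa]
  · rw [max_eq_left has]

theorem exists_lipschitzOnWith_momentOp_Ici_one {K : ℝ}
    (hg : Integrable fun t => t ^ (n - 1) * f t) (hK : ∀ t, ‖t ^ (n - 1) * f t‖ ≤ K) :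
    ∃ L, LipschitzOnWith L (momentOp n f) (Ici 1) :=
  ⟨_, (lipschitzOnWith_natCast_div_pow n).mul_of_norm_le
    (lipschitzWith_primitive hg.locallyIntegrable
      (fun t => (hK t).trans K.le_coe_toNNReal) 0).lipschitzOnWith
    (fun _ hs => abs_natCast_div_pow_le hs n)
    (fun _ _ => norm_intervalIntegral_le_integral_norm hg 0 _)⟩

theorem lipschitzOnWith_momentOp_Ioi_of_Ici_one {K : ℝ≥0} (ha : 1 ≤ a)
    (hf : ∀ t < a, f t = 0) (hK : LipschitzOnWith K (momentOp n f) (Ici 1)) :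
    LipschitzOnWith K (momentOp n f) (Ioi 0) := by
  refine LipschitzOnWith.of_dist_le_mul fun x hx y hy => ?_
  have ha0 : 0 ≤ a := zero_le_one.trans ha
  rw [← momentOp_max_eq hf ha0 hx.le, ← momentOp_max_eq hf ha0 hy.le]
  calc dist (momentOp n f (max x a)) (momentOp n f (max y a))
      ≤ K * dist (max x a) (max y a) :=
        hK.dist_le_mul _ (ha.trans (le_max_right _ _)) _ (ha.trans (le_max_right _ _))
    _ ≤ K * dist x y := by
        gcongr
        exact abs_max_sub_max_le_abs x y a

theorem integrableOn_momentOp_Ioi (hn : 2 ≤ n) (ha : 0 < a) (hf : ∀ t < a, f t = 0)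
    (hg : Integrable fun t => t ^ (n - 1) * f t) : IntegrableOn (momentOp n f) (Ioi 0) := by
  rw [← Ioc_union_Ioi_eq_Ioi ha.le]
  refine IntegrableOn.union ?_ ?_
  · refine integrableOn_zero.congr_fun (fun s hs => ?_) measurableSet_Ioc
    exact (momentOp_eq_zero_of_le hf hs.1.le hs.2).symm
  · have hpow : IntegrableOn (fun s : ℝ => (n : ℝ) / s ^ n) (Ioi a) := by
      have hn' : -(n : ℝ) < -1 := by
        have : (2 : ℝ) ≤ n := by exact_mod_cast hn
        linarith
      refine IntegrableOn.congr_fun ((integrableOn_Ioi_rpow_of_lt hn' ha).const_mul n)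
        (fun s hs => ?_) measurableSet_Ioi
      rw [Real.rpow_neg (ha.trans hs).le, Real.rpow_natCast, div_eq_mul_inv]
    have hF : Continuous fun s => ∫ t in (0 : ℝ)..s, t ^ (n - 1) * f t :=
      intervalIntegral.continuous_primitive (fun _ _ => hg.intervalIntegrable) 0
    exact hpow.mul_bdd hF.aestronglyMeasurable
      (.of_forall fun s => norm_intervalIntegral_le_integral_norm hg 0 s)

end MomentOp

theorem momentOp_lipschitz_integrable_general
    (a b : ℝ) (ha : 1 < a)
    (f : ℝ → ℝ) (hmeas : Measurable f) (hbdd : ∃ M : ℝ, ∀ t : ℝ, |f t| ≤ M)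
    (hsupp : ∀ t : ℝ, t ∉ Set.Icc a b → f t = 0)
    (n : ℕ) (hn : 2 ≤ n) :
    (∃ L : ℝ, 0 < L ∧ ∀ s₁ s₂ : ℝ, 0 < s₁ → 0 < s₂ →
      |momentOp n f s₁ - momentOp n f s₂| ≤ L * |s₁ - s₂|) ∧
    (∫⁻ s in Set.Ioi (0 : ℝ), ENNReal.ofReal |momentOp n f s| < ⊤) := by
  obtain ⟨M, hM⟩ := hbdd
  have hsupport : Function.support f ⊆ Icc a b := fun t ht => by_contra fun h => ht (hsupp t h)
  have hbelow : ∀ t < a, f t = 0 := fun t ht => hsupp t fun h => ht.not_ge h.1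
  have hg := integrable_pow_mul (n := n) (by linarith) hmeas hM hsupport
  obtain ⟨K, hK⟩ := exists_lipschitzOnWith_momentOp_Ici_one hg
    (norm_pow_mul_le (by linarith) hM hsupport)
  refine ⟨⟨K + 1, by positivity, fun s₁ s₂ hs₁ hs₂ => ?_⟩,
    (hasFiniteIntegral_iff_norm _).1 (integrableOn_momentOp_Ioi hn (by linarith) hbelow hg).2⟩
  calc |momentOp n f s₁ - momentOp n f s₂| ≤ K * |s₁ - s₂| :=
        (lipschitzOnWith_momentOp_Ioi_of_Ici_one ha.le hbelow hK).dist_le_mul s₁ hs₁ s₂ hs₂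
    _ ≤ (K + 1) * |s₁ - s₂| := by gcongr; linarith

/-- If `1 < a < b` and `f` is bounded, measurable and vanishes outside `[a,b]`, then for every
`n ≥ 2` the function `T_n f` is Lipschitz on `(0,∞)` and Lebesgue integrable on `(0,∞)`. -/
theorem momentOp_lipschitz_integrable
    (a b : ℝ) (ha : 1 < a) (hab : a < b)
    (f : ℝ → ℝ) (hmeas : Measurable f) (hbdd : ∃ M : ℝ, ∀ t : ℝ, |f t| ≤ M)
    (hsupp : ∀ t : ℝ, t ∉ Set.Icc a b → f t = 0)
    (n : ℕ) (hn : 2 ≤ n) :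
    (∃ L : ℝ, 0 < L ∧ ∀ s₁ s₂ : ℝ, 0 < s₁ → 0 < s₂ →
      |momentOp n f s₁ - momentOp n f s₂| ≤ L * |s₁ - s₂|) ∧
    (∫⁻ s in Set.Ioi (0 : ℝ), ENNReal.ofReal |momentOp n f s| < ⊤) :=
  momentOp_lipschitz_integrable_general a b ha f hmeas hbdd hsupp n hn
end

section
/- Let 1 < a < b be reals and let f : ℝ → ℝ be a continuous function vanishing outside [a,b]. Then for every integer n ≥ 2, ∫₀^{+∞} T_n f(s) ds = (n/(n−1))·∫_a^b f(s) ds. -/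
/-!
Integrating by parts, `T_n f` is, on `(0, ∞)`, the derivative of
`(n/(n-1)) (∫₀ˢ f - s^{1-n} ∫₀ˢ t^{n-1} f(t) dt)`. This primitive vanishes near `0` because `f`
does, and tends to `(n/(n-1)) ∫_a^b f` at infinity because `s^{1-n} → 0`. Integrability of `T_n f`
on `(0, ∞)` comes from the same primitive for `|f|`, whose derivative `T_n |f|` is nonnegative and
dominates `|T_n f|`.
-/

open MeasureTheory

open Set Filter Topology

theorem intervalIntegral_eq_zero_of_forall_mem_Ioo {g : ℝ → ℝ} {x y : ℝ} (hxy : x ≤ y)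
    (h : ∀ t ∈ Ioo x y, g t = 0) : ∫ t in x..y, g t = 0 := by
  rw [intervalIntegral.integral_of_le hxy, integral_Ioc_eq_integral_Ioo]
  exact setIntegral_eq_zero_of_forall_eq_zero h

theorem intervalIntegral_eq_of_forall_mem_Ioo {g : ℝ → ℝ} {x y z : ℝ}
    (hxy : IntervalIntegrable g volume x y) (hyz : IntervalIntegrable g volume y z) (hle : y ≤ z)
    (h : ∀ t ∈ Ioo y z, g t = 0) : ∫ t in x..z, g t = ∫ t in x..y, g t := by
  rw [← intervalIntegral.integral_add_adjacent_intervals hxy hyz,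
    intervalIntegral_eq_zero_of_forall_mem_Ioo hle h, add_zero]

noncomputable def momentOpPrimitive (n : ℕ) (f : ℝ → ℝ) (s : ℝ) : ℝ :=
  (n / (n - 1) : ℝ) *
    ((∫ t in (0 : ℝ)..s, f t) - s ^ (1 - (n : ℤ)) * ∫ t in (0 : ℝ)..s, t ^ (n - 1) * f t)

variable {n : ℕ} {f : ℝ → ℝ} {a b : ℝ}

theorem hasDerivAt_momentOpPrimitive (hf : Continuous f) (hn : 2 ≤ n) {s : ℝ} (hs : s ≠ 0) :
    HasDerivAt (momentOpPrimitive n f) (momentOp n f s) s := by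
  have hF : HasDerivAt (fun u => ∫ t in (0 : ℝ)..u, f t) (f s) s :=
    (hf.integral_hasStrictDerivAt 0 s).hasDerivAt
  have hP : HasDerivAt (fun u => ∫ t in (0 : ℝ)..u, t ^ (n - 1) * f t) (s ^ (n - 1) * f s) s :=
    ((by fun_prop : Continuous fun t : ℝ => t ^ (n - 1) * f t).integral_hasStrictDerivAt
      0 s).hasDerivAt
  have hz := hasDerivAt_zpow (1 - n : ℤ) s (Or.inl hs)
  refine ((hF.sub (hz.mul hP)).const_mul ((n : ℝ) / (n - 1))).congr_deriv ?_
  obtain ⟨m, rfl⟩ : ∃ m, n = m + 1 := ⟨n - 1, by omega⟩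
  have hm : (m : ℝ) ≠ 0 := by norm_cast; omega
  rw [show (1 : ℤ) - (m + 1 : ℕ) = -(m : ℤ) by push_cast; ring,
    show -(m : ℤ) - 1 = -((m + 1 : ℕ) : ℤ) by push_cast; ring]
  simp only [momentOp, zpow_neg, zpow_natCast, Nat.add_sub_cancel]
  push_cast
  rw [add_sub_cancel_right]
  field_simp
  ring

theorem momentOpPrimitive_eq_zero (h0 : ∀ t ∈ Ioo 0 a, f t = 0) {s : ℝ} (hs : s ∈ Icc 0 a) :
    momentOpPrimitive n f s = 0 := by
  have hvanish : ∀ t ∈ Ioo 0 s, f t = 0 := fun t ht => h0 t ⟨ht.1, ht.2.trans_le hs.2⟩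
  rw [momentOpPrimitive, intervalIntegral_eq_zero_of_forall_mem_Ioo hs.1 hvanish,
    intervalIntegral_eq_zero_of_forall_mem_Ioo hs.1 fun t ht => by rw [hvanish t ht, mul_zero]]
  simp

theorem continuousWithinAt_momentOpPrimitive_zero (ha : 0 < a) (h0 : ∀ t ∈ Ioo 0 a, f t = 0) :
    ContinuousWithinAt (momentOpPrimitive n f) (Ici 0) 0 := by
  have hzero : momentOpPrimitive n f =ᶠ[𝓝[≥] 0] fun _ => 0 :=
    eventually_of_mem (Icc_mem_nhdsGE ha) fun s hs => momentOpPrimitive_eq_zero h0 hs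
  exact continuousWithinAt_const.congr_of_eventuallyEq hzero
    (momentOpPrimitive_eq_zero h0 ⟨le_rfl, ha.le⟩)

theorem tendsto_momentOpPrimitive_atTop (hf : Continuous f) (hn : 2 ≤ n)
    (hb : ∀ t ∈ Ioi b, f t = 0) :
    Tendsto (momentOpPrimitive n f) atTop (𝓝 ((n / (n - 1) : ℝ) * ∫ t in (0 : ℝ)..b, f t)) := by
  have hg : Continuous fun t : ℝ => t ^ (n - 1) * f t := by fun_prop
  have hlarge : ∀ᶠ s in atTop, (n / (n - 1) : ℝ) * ((∫ t in (0 : ℝ)..b, f t) -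
      s ^ (1 - (n : ℤ)) * ∫ t in (0 : ℝ)..b, t ^ (n - 1) * f t) = momentOpPrimitive n f s := by
    filter_upwards [eventually_ge_atTop b] with s hs
    rw [momentOpPrimitive,
      intervalIntegral_eq_of_forall_mem_Ioo (hf.intervalIntegrable _ _) (hf.intervalIntegrable _ _)
        hs fun t ht => hb t ht.1,
      intervalIntegral_eq_of_forall_mem_Ioo (hg.intervalIntegrable _ _) (hg.intervalIntegrable _ _)
        hs fun t ht => by rw [hb t ht.1, mul_zero]]
  have hdecay : Tendsto (fun s : ℝ => s ^ (1 - (n : ℤ))) atTop (𝓝 0) :=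
    tendsto_zpow_atTop_zero (by omega)
  refine Tendsto.congr' hlarge ?_
  simpa using ((hdecay.mul_const _).const_sub _).const_mul _

theorem norm_momentOp_le {s : ℝ} (hs : 0 ≤ s) :
    ‖momentOp n f s‖ ≤ momentOp n (fun t => |f t|) s := by
  rw [momentOp, momentOp, norm_mul, Real.norm_of_nonneg (by positivity)]
  gcongr
  calc ‖∫ t in (0 : ℝ)..s, t ^ (n - 1) * f t‖
      ≤ ∫ t in (0 : ℝ)..s, ‖t ^ (n - 1) * f t‖ := intervalIntegral.norm_integral_le_integral_norm hs
    _ = ∫ t in (0 : ℝ)..s, t ^ (n - 1) * |f t| := by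
      refine intervalIntegral.integral_congr fun t ht => ?_
      rw [uIcc_of_le hs] at ht
      simp [abs_of_nonneg ht.1]

theorem integrableOn_momentOp (hf : Continuous f) (hn : 2 ≤ n) (ha : 0 < a)
    (h0 : ∀ t ∈ Ioo 0 a, f t = 0) (hb : ∀ t ∈ Ioi b, f t = 0) :
    IntegrableOn (momentOp n f) (Ioi 0) := by
  have habs : IntegrableOn (momentOp n fun t => |f t|) (Ioi 0) :=
    integrableOn_Ioi_deriv_of_nonneg
      (continuousWithinAt_momentOpPrimitive_zero ha fun t ht => by simp [h0 t ht])
      (fun s hs => hasDerivAt_momentOpPrimitive hf.abs hn hs.ne')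
      (fun s hs => (norm_nonneg _).trans (norm_momentOp_le (f := f) hs.le))
      (tendsto_momentOpPrimitive_atTop (b := b) hf.abs hn fun t ht => by simp [hb t ht])
  have hg : Continuous fun t : ℝ => t ^ (n - 1) * f t := by fun_prop
  have hmeas : Measurable (momentOp n f) :=
    (measurable_const.div (measurable_id.pow_const n)).mul
      (intervalIntegral.continuous_primitive (fun _ _ => hg.intervalIntegrable _ _) 0).measurable
  exact habs.mono' hmeas.aestronglyMeasurable
    ((ae_restrict_iff' measurableSet_Ioi).2 (.of_forall fun s hs => norm_momentOp_le hs.le))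

theorem momentOp_integral_eq_general
    (a b : ℝ) (ha : 1 < a)
    (f : ℝ → ℝ) (hcont : Continuous f)
    (hsupp : ∀ t : ℝ, t ∉ Set.Icc a b → f t = 0)
    (n : ℕ) (hn : 2 ≤ n) :
    ∫ s in Set.Ioi (0 : ℝ), momentOp n f s = ((n : ℝ) / (n - 1)) * ∫ s in a..b, f s := by
  have ha0 : 0 < a := by linarith
  have h0 : ∀ t ∈ Ioo 0 a, f t = 0 := fun t ht => hsupp t fun h => ht.2.not_ge h.1
  have hb : ∀ t ∈ Ioi b, f t = 0 := fun t ht => hsupp t fun h => h.2.not_gt ht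
  rw [integral_Ioi_of_hasDerivAt_of_tendsto (continuousWithinAt_momentOpPrimitive_zero ha0 h0)
      (fun s hs => hasDerivAt_momentOpPrimitive hcont hn hs.ne')
      (integrableOn_momentOp hcont hn ha0 h0 hb) (tendsto_momentOpPrimitive_atTop hcont hn hb),
    momentOpPrimitive_eq_zero h0 ⟨le_rfl, ha0.le⟩, sub_zero,
    ← intervalIntegral.integral_add_adjacent_intervals (hcont.intervalIntegrable 0 a)
      (hcont.intervalIntegrable a b), intervalIntegral_eq_zero_of_forall_mem_Ioo ha0.le h0,
    zero_add]

/-- If `1 < a < b` and `f` is continuous and vanishes outside `[a,b]`, then for every `n ≥ 2`,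
`∫₀^∞ T_n f(s) ds = (n/(n-1)) ∫_a^b f(s) ds`. -/
theorem momentOp_integral_eq
    (a b : ℝ) (ha : 1 < a) (hab : a < b)
    (f : ℝ → ℝ) (hcont : Continuous f)
    (hsupp : ∀ t : ℝ, t ∉ Set.Icc a b → f t = 0)
    (n : ℕ) (hn : 2 ≤ n) :
    ∫ s in Set.Ioi (0 : ℝ), momentOp n f s = ((n : ℝ) / (n - 1)) * ∫ s in a..b, f s :=
  momentOp_integral_eq_general a b ha f hcont hsupp n hn
end

section
/- Let 0 < a < b be reals and let f : ℝ → ℝ be a continuous function vanishing outside [a,b]. Then the sequence (T_n f)_n converges to f uniformly on (0,∞): sup_{s > 0} |T_n f(s) − f(s)| → 0 as n → ∞. -/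
open MeasureTheory Filter

/-!
Substituting `t = s w` writes `T_n f (s) - f (s)` as `∫₀¹ n wⁿ⁻¹ (f (s w) - f (s)) dw`: the kernel
`n wⁿ⁻¹` has total mass `1` and puts mass only `cⁿ` on `[0, c]`. So it suffices that
`|f (s w) - f (s)|` is small for `w ∈ [c, 1]` uniformly in `s > 0`. For `s` bounded this is
uniform continuity of `f`; for `s` large both `s w` and `s` lie where `f` is close to its limit at
`+∞` (here `0`, as `f` has compact support).
-/

open Set Topology

lemma integral_moment_kernel {n : ℕ} (hn : n ≠ 0) (a b : ℝ) :
    ∫ w in a..b, (n : ℝ) * w ^ (n - 1) = b ^ n - a ^ n := by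
  obtain ⟨k, rfl⟩ := Nat.exists_eq_succ_of_ne_zero hn
  rw [intervalIntegral.integral_const_mul, integral_pow]
  push_cast
  field_simp

lemma abs_integral_moment_kernel_mul_le {n : ℕ} (hn : n ≠ 0) {g : ℝ → ℝ} {a b c M ε : ℝ}
    (ha : 0 ≤ a) (hac : a ≤ c) (hcb : c ≤ b) (hg : IntervalIntegrable g volume a b)
    (hM : ∀ w ∈ Ioc a c, |g w| ≤ M) (hε : ∀ w ∈ Ioc c b, |g w| ≤ ε) :
    |∫ w in a..b, n * w ^ (n - 1) * g w| ≤ M * (c ^ n - a ^ n) + ε * (b ^ n - c ^ n) := by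
  have hkg : IntervalIntegrable (fun w => n * w ^ (n - 1) * g w) volume a b :=
    hg.continuousOn_mul (by fun_prop)
  have piece : ∀ {x y B : ℝ}, a ≤ x → x ≤ y → (∀ w ∈ Ioc x y, |g w| ≤ B) →
      |∫ w in x..y, n * w ^ (n - 1) * g w| ≤ B * (y ^ n - x ^ n) := by
    intro x y B hax hxy hB
    calc |∫ w in x..y, n * w ^ (n - 1) * g w|
        ≤ ∫ w in x..y, n * w ^ (n - 1) * B := by
          rw [← Real.norm_eq_abs]
          refine intervalIntegral.norm_integral_le_of_norm_le hxy (ae_of_all _ fun w hw => ?_)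
            ((by fun_prop : Continuous fun w : ℝ => n * w ^ (n - 1) * B).intervalIntegrable _ _)
          have hk : 0 ≤ (n : ℝ) * w ^ (n - 1) := by
            have : 0 ≤ w := ha.trans (hax.trans hw.1.le)
            positivity
          rw [Real.norm_eq_abs, abs_mul, abs_of_nonneg hk]
          exact mul_le_mul_of_nonneg_left (hB w hw) hk
      _ = B * (y ^ n - x ^ n) := by
          rw [intervalIntegral.integral_mul_const, integral_moment_kernel hn, mul_comm]
  rw [← intervalIntegral.integral_add_adjacent_intervals
    (hkg.mono_set (uIcc_subset_uIcc_left (mem_uIcc_of_le hac hcb)))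
    (hkg.mono_set (uIcc_subset_uIcc_right (mem_uIcc_of_le hac hcb)))]
  exact (abs_add_le _ _).trans (add_le_add (piece le_rfl hac hM) (piece hac hcb hε))

lemma momentOp_eq_integral_unitInterval (n : ℕ) (f : ℝ → ℝ) {s : ℝ} (hs : s ≠ 0) :
    momentOp n f s = ∫ w in (0 : ℝ)..1, n * w ^ (n - 1) * f (s * w) := by
  rcases Nat.eq_zero_or_pos n with rfl | hn
  · simp [momentOp]
  have hsub := intervalIntegral.integral_comp_mul_left (fun t => t ^ (n - 1) * f t) hs
    (a := 0) (b := 1)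
  simp only [mul_zero, mul_one, mul_pow, smul_eq_mul, mul_assoc,
    intervalIntegral.integral_const_mul] at hsub
  have hpow : s ^ n = s * s ^ (n - 1) := by rw [← pow_succ', Nat.sub_add_cancel hn]
  simp only [momentOp, mul_assoc, intervalIntegral.integral_const_mul, hpow]
  field_simp
  rw [mul_assoc, hsub, mul_inv_cancel_left₀ hs]

lemma momentOp_sub_eq_integral_unitInterval {n : ℕ} (hn : n ≠ 0) {f : ℝ → ℝ} {s : ℝ}
    (hs : s ≠ 0) (hf : IntervalIntegrable (fun w => f (s * w)) volume 0 1) :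
    momentOp n f s - f s = ∫ w in (0 : ℝ)..1, n * w ^ (n - 1) * (f (s * w) - f s) := by
  simp_rw [mul_sub]
  rw [intervalIntegral.integral_sub (hf.continuousOn_mul (by fun_prop))
    (Continuous.intervalIntegrable (by fun_prop) _ _),
    intervalIntegral.integral_mul_const, integral_moment_kernel hn,
    momentOp_eq_integral_unitInterval n f hs]
  simp [hn]

lemma abs_momentOp_sub_le {n : ℕ} (hn : n ≠ 0) {f : ℝ → ℝ} (hf : Continuous f) {s c M ε : ℝ}
    (hs : 0 < s) (hc0 : 0 ≤ c) (hc1 : c ≤ 1) (hM : ∀ t ≥ 0, |f t| ≤ M)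
    (hε : ∀ w ∈ Icc c 1, |f (s * w) - f s| ≤ ε) (hε0 : 0 ≤ ε) :
    |momentOp n f s - f s| ≤ 2 * M * c ^ n + ε := by
  have hfar : ∀ w ∈ Ioc 0 c, |f (s * w) - f s| ≤ 2 * M := fun w hw =>
    (abs_sub _ _).trans (by linarith [hM (s * w) (by nlinarith [hw.1]), hM s hs.le])
  calc |momentOp n f s - f s|
      = |∫ w in (0 : ℝ)..1, n * w ^ (n - 1) * (f (s * w) - f s)| := by
        rw [momentOp_sub_eq_integral_unitInterval hn hs.ne'
          (Continuous.intervalIntegrable (by fun_prop) _ _)]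
    _ ≤ 2 * M * (c ^ n - 0 ^ n) + ε * (1 ^ n - c ^ n) :=
        abs_integral_moment_kernel_mul_le hn le_rfl hc0 hc1
          (Continuous.intervalIntegrable (by fun_prop) _ _) hfar
          fun w hw => hε w (Ioc_subset_Icc_self hw)
    _ ≤ 2 * M * c ^ n + ε := by
        rw [zero_pow hn, one_pow, sub_zero]
        nlinarith [pow_nonneg hc0 n]

theorem UniformContinuous.exists_abs_comp_mul_sub_le {f : ℝ → ℝ} {L : ℝ}
    (hf : UniformContinuous f) (hlim : Tendsto f atTop (𝓝 L)) {ε : ℝ} (hε : 0 < ε) :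
    ∃ c ∈ Ico (0 : ℝ) 1, ∀ s ≥ 0, ∀ w ∈ Icc c 1, |f (s * w) - f s| ≤ ε := by
  obtain ⟨δ, hδ, hfδ⟩ := Metric.uniformContinuous_iff.1 hf ε hε
  obtain ⟨R, hR⟩ :=
    eventually_atTop.1 <| hlim.eventually (Metric.closedBall_mem_nhds L (half_pos hε))
  set R' := max R 1
  have hR' : 0 < R' := lt_max_of_lt_right one_pos
  have hδR : 0 < δ / (4 * R') := by positivity
  refine ⟨max (1 / 2) (1 - δ / (4 * R')), ⟨by positivity, max_lt (by norm_num) (by linarith)⟩,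
    fun s hs w hw => ?_⟩
  have hw1 : 1 - w ≤ δ / (4 * R') := by linarith [le_max_right (1 / 2) (1 - δ / (4 * R')), hw.1]
  have hw2 : 1 / 2 ≤ w := (le_max_left _ _).trans hw.1
  rw [← Real.dist_eq]
  rcases le_or_gt s (2 * R') with hs2 | hs2
  · refine (hfδ ?_).le
    rw [Real.dist_eq, abs_of_nonpos (by nlinarith [hw.2])]
    calc -(s * w - s) = s * (1 - w) := by ring
      _ ≤ 2 * R' * (δ / (4 * R')) := mul_le_mul hs2 hw1 (by linarith [hw.2]) (by positivity)
      _ < δ := by field_simp; linarith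
  · have hsR : R ≤ s := by linarith [le_max_left R 1]
    have hswR : R ≤ s * w := by nlinarith [le_max_left R 1]
    linarith [dist_triangle_right (f (s * w)) (f s) L, Metric.mem_closedBall.1 (hR _ hswR),
      Metric.mem_closedBall.1 (hR _ hsR)]

theorem tendstoUniformlyOn_momentOp {f : ℝ → ℝ} {M L : ℝ} (hf : UniformContinuous f)
    (hM : ∀ t ≥ 0, |f t| ≤ M) (hlim : Tendsto f atTop (𝓝 L)) :
    TendstoUniformlyOn (fun n s => momentOp n f s) f atTop (Ioi 0) := by
  rw [Metric.tendstoUniformlyOn_iff]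
  intro ε hε
  obtain ⟨c, ⟨hc0, hc1⟩, hc⟩ := hf.exists_abs_comp_mul_sub_le hlim (half_pos hε)
  have hpow : Tendsto (fun n => 2 * M * c ^ n) atTop (𝓝 0) := by
    simpa using (tendsto_pow_atTop_nhds_zero_of_lt_one hc0 hc1).const_mul (2 * M)
  filter_upwards [hpow.eventually_lt_const (half_pos hε), eventually_ne_atTop 0]
    with n hn hn0 s (hs : 0 < s)
  rw [dist_comm, Real.dist_eq]
  linarith [abs_momentOp_sub_le hn0 hf.continuous hs hc0 hc1.le hM (hc s hs.le) (half_pos hε).le]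

theorem momentOp_tendstoUniformly_general
    (a b : ℝ)
    (f : ℝ → ℝ) (hcont : Continuous f)
    (hsupp : ∀ t : ℝ, t ∉ Set.Icc a b → f t = 0) :
    TendstoUniformlyOn (fun n s => momentOp n f s) f atTop (Set.Ioi (0 : ℝ)) := by
  have hf : HasCompactSupport f := HasCompactSupport.intro isCompact_Icc hsupp
  obtain ⟨M, hM⟩ := hcont.bounded_above_of_compact_support hf
  exact tendstoUniformlyOn_momentOp (hf.uniformContinuous_of_continuous hcont)
    (fun t _ => hM t) (hf.is_zero_at_infty.mono_left atTop_le_cocompact)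

/-- If `0 < a < b` and `f` is continuous and vanishes outside `[a,b]`, then `(T_n f)` converges
to `f` uniformly on `(0,∞)`. -/
theorem momentOp_tendstoUniformly
    (a b : ℝ) (ha : 0 < a) (hab : a < b)
    (f : ℝ → ℝ) (hcont : Continuous f)
    (hsupp : ∀ t : ℝ, t ∉ Set.Icc a b → f t = 0) :
    TendstoUniformlyOn (fun n s => momentOp n f s) f atTop (Set.Ioi (0 : ℝ)) :=
  momentOp_tendstoUniformly_general a b f hcont hsupp
end

section
/- Let 1 < a < b be reals and let f : ℝ → ℝ be a continuous function vanishing outside [a,b]. Then lim_{n→∞} ∫₀^{+∞} |T_n f(s) − f(s)| ds = 0. -/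
/-!
`T_n f(s)` is the average of `f` over `[0, s]` against the probability density `n tⁿ⁻¹ / sⁿ`,
which concentrates at `t = s` as `n → ∞`. Hence `T_n f → f` pointwise on `(0, ∞)`, with
`|T_n f - f| ≤ 2 sup |f|` on a bounded interval `(0, b]`, where dominated convergence applies.
Beyond the support, `T_n f(s) = (b / s)ⁿ T_n f(b)`, whose integral over `(b, ∞)` is
`|T_n f(b)| b / (n - 1) → 0`.
-/

open MeasureTheory Filter

open Set intervalIntegral Topology

section

variable {f : ℝ → ℝ}

theorem intervalIntegrable_pow_pred_mul (hf : Continuous f) (n : ℕ) (u v : ℝ) :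
    IntervalIntegrable (fun t => t ^ (n - 1) * f t) volume u v :=
  (by fun_prop : Continuous fun t => t ^ (n - 1) * f t).intervalIntegrable u v

theorem integral_pow_pred {n : ℕ} (hn : n ≠ 0) (c d : ℝ) :
    ∫ t in c..d, t ^ (n - 1) = (d ^ n - c ^ n) / n := by
  obtain ⟨k, rfl⟩ := Nat.exists_eq_succ_of_ne_zero hn
  simp [integral_pow]

theorem abs_integral_pow_pred_mul_le {n : ℕ} (hn : n ≠ 0) {c d A : ℝ}
    (hc : 0 ≤ c) (hcd : c ≤ d) (hA : ∀ t ∈ Icc c d, |f t| ≤ A) :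
    |∫ t in c..d, t ^ (n - 1) * f t| ≤ A * (d ^ n - c ^ n) / n := calc
  _ = ‖∫ t in c..d, t ^ (n - 1) * f t‖ := (Real.norm_eq_abs _).symm
  _ ≤ ∫ t in c..d, t ^ (n - 1) * A := by
    refine intervalIntegral.norm_integral_le_of_norm_le hcd (ae_of_all _ fun t ht => ?_)
      (intervalIntegrable_pow_pred_mul continuous_const n c d)
    have ht0 : 0 ≤ t := hc.trans ht.1.le
    rw [Real.norm_eq_abs, abs_mul, abs_of_nonneg (pow_nonneg ht0 _)]
    exact mul_le_mul_of_nonneg_left (hA t (Ioc_subset_Icc_self ht)) (pow_nonneg ht0 _)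
  _ = A * (d ^ n - c ^ n) / n := by
    rw [intervalIntegral.integral_mul_const, integral_pow_pred hn]; ring

/-- `(c / s) ^ n` is the mass that the density `n tⁿ⁻¹ / sⁿ` gives to `[0, c]`. -/
theorem abs_momentOp_le_of_split (hf : Continuous f) {n : ℕ} (hn : n ≠ 0)
    {s c A B : ℝ} (hs : 0 < s) (hc : 0 ≤ c) (hcs : c ≤ s)
    (hA : ∀ t ∈ Icc 0 c, |f t| ≤ A) (hB : ∀ t ∈ Icc c s, |f t| ≤ B) :
    |momentOp n f s| ≤ A * (c / s) ^ n + B * (1 - (c / s) ^ n) := by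
  have hint := intervalIntegrable_pow_pred_mul hf n
  rw [momentOp, ← integral_add_adjacent_intervals (hint 0 c) (hint c s), abs_mul,
    abs_of_nonneg (by positivity)]
  calc _ ≤ n / s ^ n * (A * (c ^ n - 0 ^ n) / n + B * (s ^ n - c ^ n) / n) := by
        gcongr
        exact (abs_add_le _ _).trans (add_le_add (abs_integral_pow_pred_mul_le hn le_rfl hc hA)
          (abs_integral_pow_pred_mul_le hn hc hcs hB))
    _ = A * (c / s) ^ n + B * (1 - (c / s) ^ n) := by
        have : (n : ℝ) ≠ 0 := by exact_mod_cast hn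
        rw [zero_pow hn, div_pow]
        field_simp
        ring

theorem abs_momentOp_le (hf : Continuous f) (n : ℕ) {s M : ℝ} (hs : 0 < s)
    (hM : ∀ t ∈ Icc 0 s, |f t| ≤ M) : |momentOp n f s| ≤ M := by
  rcases eq_or_ne n 0 with rfl | hn
  · simpa [momentOp] using (abs_nonneg _).trans (hM 0 ⟨le_rfl, hs.le⟩)
  simpa [hs.ne'] using abs_momentOp_le_of_split hf hn hs hs.le le_rfl hM
    fun t ht => hM t ⟨hs.le.trans ht.1, ht.2⟩

theorem momentOp_sub_self (hf : Continuous f) {n : ℕ} (hn : n ≠ 0) {s : ℝ}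
    (hs : s ≠ 0) : momentOp n f s - f s = momentOp n (fun t => f t - f s) s := by
  simp only [momentOp, mul_sub]
  rw [integral_sub (intervalIntegrable_pow_pred_mul hf n 0 s)
      (intervalIntegrable_pow_pred_mul continuous_const n 0 s), intervalIntegral.integral_mul_const,
    integral_pow_pred hn, zero_pow hn]
  have : (n : ℝ) ≠ 0 := by exact_mod_cast hn
  field_simp
  ring

theorem tendsto_momentOp (hf : Continuous f) {s : ℝ} (hs : 0 < s) :
    Tendsto (fun n => momentOp n f s) atTop (𝓝 (f s)) := by
  have hg : Continuous fun t => f t - f s := by fun_prop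
  obtain ⟨M, hM⟩ := (isCompact_Icc : IsCompact (Icc 0 s)).exists_bound_of_continuousOn
    hg.continuousOn
  rw [Metric.tendsto_nhds]
  intro ε hε
  obtain ⟨δ, hδ, hfδ⟩ := Metric.continuous_iff.1 hf s (ε / 2) (half_pos hε)
  set c := max (s - δ / 2) 0
  have hc : 0 ≤ c := le_max_right _ _
  have hcs : c < s := max_lt (by linarith) hs
  have hclose : ∀ t ∈ Icc c s, |f t - f s| ≤ ε / 2 := fun t ht => by
    refine (hfδ t ?_).le
    rw [Real.dist_eq, abs_of_nonpos (by linarith [ht.2])]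
    linarith [ht.1, le_max_left (s - δ / 2) 0]
  have hgeom : Tendsto (fun n : ℕ => M * (c / s) ^ n) atTop (𝓝 0) := by
    simpa using (tendsto_pow_atTop_nhds_zero_of_lt_one (by positivity)
      ((div_lt_one hs).2 hcs)).const_mul M
  filter_upwards [hgeom.eventually (gt_mem_nhds (half_pos hε)), eventually_ne_atTop 0]
    with n hsmall hn
  rw [Real.dist_eq, momentOp_sub_self hf hn hs.ne']
  have hsplit := abs_momentOp_le_of_split hg hn hs hc hcs.le
    (fun t ht => hM t ⟨ht.1, ht.2.trans hcs.le⟩) hclose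
  have : 0 ≤ (c / s) ^ n := by positivity
  nlinarith

theorem continuousOn_momentOp (hf : Continuous f) (n : ℕ) :
    ContinuousOn (momentOp n f) {0}ᶜ := by
  have hF : Continuous fun s : ℝ => ∫ t in (0 : ℝ)..s, t ^ (n - 1) * f t :=
    continuous_primitive (intervalIntegrable_pow_pred_mul hf n) 0
  exact (continuousOn_const.div (continuous_pow n).continuousOn
    fun s hs => pow_ne_zero _ hs).mul hF.continuousOn

theorem ae_restrict_Ioc_abs_momentOp_sub_le (hf : Continuous f) (n : ℕ) {b M : ℝ}
    (hM : ∀ t ∈ Icc 0 b, |f t| ≤ M) :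
    ∀ᵐ s ∂volume.restrict (Ioc 0 b), ‖|momentOp n f s - f s|‖ ≤ 2 * M := by
  filter_upwards [ae_restrict_mem measurableSet_Ioc] with s hs
  have hMs : ∀ t ∈ Icc 0 s, |f t| ≤ M := fun t ht => hM t ⟨ht.1, ht.2.trans hs.2⟩
  rw [Real.norm_eq_abs, abs_abs]
  linarith [abs_sub (momentOp n f s) (f s), abs_momentOp_le hf n hs.1 hMs,
    hMs s ⟨hs.1.le, le_rfl⟩]

theorem aestronglyMeasurable_abs_momentOp_sub (hf : Continuous f) (n : ℕ) (b : ℝ) :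
    AEStronglyMeasurable (fun s => |momentOp n f s - f s|) (volume.restrict (Ioc 0 b)) :=
  (((continuousOn_momentOp hf n).mono fun _ hs => hs.1.ne').sub hf.continuousOn).abs
    |>.aestronglyMeasurable measurableSet_Ioc

theorem tendsto_integral_Ioc_abs_momentOp_sub (hf : Continuous f) (b : ℝ) :
    Tendsto (fun n => ∫ s in Ioc 0 b, |momentOp n f s - f s|) atTop (𝓝 0) := by
  obtain ⟨M, hM⟩ := (isCompact_Icc : IsCompact (Icc 0 b)).exists_bound_of_continuousOn
    hf.continuousOn
  have hlim : ∀ᵐ s ∂volume.restrict (Ioc 0 b),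
      Tendsto (fun n => |momentOp n f s - f s|) atTop (𝓝 0) := by
    filter_upwards [ae_restrict_mem measurableSet_Ioc] with s hs
    simpa using ((tendsto_momentOp hf hs.1).sub_const (f s)).abs
  simpa using tendsto_integral_of_dominated_convergence (fun _ => 2 * M)
    (aestronglyMeasurable_abs_momentOp_sub hf · b) (integrableOn_const measure_Ioc_lt_top.ne)
    (ae_restrict_Ioc_abs_momentOp_sub_le hf · hM) hlim

theorem integrableOn_Ioc_abs_momentOp_sub (hf : Continuous f) (n : ℕ) (b : ℝ) :
    IntegrableOn (fun s => |momentOp n f s - f s|) (Ioc 0 b) := by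
  obtain ⟨M, hM⟩ := (isCompact_Icc : IsCompact (Icc 0 b)).exists_bound_of_continuousOn
    hf.continuousOn
  exact (integrableOn_const (C := 2 * M) measure_Ioc_lt_top.ne).mono'
    (aestronglyMeasurable_abs_momentOp_sub hf n b) (ae_restrict_Ioc_abs_momentOp_sub_le hf n hM)

theorem momentOp_eq_div_pow_mul (hf : Continuous f) (n : ℕ) {b s : ℝ}
    (hb : 0 < b) (hbs : b ≤ s) (hvan : ∀ t, b < t → f t = 0) :
    momentOp n f s = (b / s) ^ n * momentOp n f b := by
  have hint := intervalIntegrable_pow_pred_mul hf n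
  have htail : ∫ t in b..s, t ^ (n - 1) * f t = 0 := by
    rw [integral_of_le hbs]
    exact setIntegral_eq_zero_of_forall_eq_zero fun t ht => by rw [hvan t ht.1, mul_zero]
  rw [momentOp, momentOp, ← integral_add_adjacent_intervals (hint 0 b) (hint b s), htail,
    add_zero, div_pow]
  have : b ^ n ≠ 0 := by positivity
  field_simp

theorem eqOn_abs_momentOp_sub_Ioi (hf : Continuous f) (n : ℕ) {b : ℝ}
    (hb : 0 < b) (hvan : ∀ t, b < t → f t = 0) :
    EqOn (fun s => |momentOp n f s - f s|)
      (fun s => |momentOp n f b| * b ^ n * s ^ (-(n : ℝ))) (Ioi b) := fun s hs => by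
  have hs0 : 0 < s := hb.trans hs
  simp only
  rw [hvan s hs, sub_zero, momentOp_eq_div_pow_mul hf n hb hs.le hvan, abs_mul,
    abs_of_nonneg (by positivity), Real.rpow_neg hs0.le, Real.rpow_natCast, div_pow]
  ring

theorem integrableOn_Ioi_abs_momentOp_sub (hf : Continuous f) {n : ℕ} (hn : 1 < n)
    {b : ℝ} (hb : 0 < b) (hvan : ∀ t, b < t → f t = 0) :
    IntegrableOn (fun s => |momentOp n f s - f s|) (Ioi b) := by
  have hexp : -(n : ℝ) < -1 := by simpa using (Nat.one_lt_cast (α := ℝ)).2 hn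
  exact IntegrableOn.congr_fun ((integrableOn_Ioi_rpow_of_lt hexp hb).const_mul _)
    (eqOn_abs_momentOp_sub_Ioi hf n hb hvan).symm measurableSet_Ioi

theorem integral_Ioi_abs_momentOp_sub (hf : Continuous f) {n : ℕ} (hn : 1 < n)
    {b : ℝ} (hb : 0 < b) (hvan : ∀ t, b < t → f t = 0) :
    ∫ s in Ioi b, |momentOp n f s - f s| = |momentOp n f b| * b / (n - 1) := by
  have hn' : (1 : ℝ) < n := by exact_mod_cast hn
  rw [setIntegral_congr_fun measurableSet_Ioi (eqOn_abs_momentOp_sub_Ioi hf n hb hvan),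
    MeasureTheory.integral_const_mul, integral_Ioi_rpow_of_lt (by linarith) hb]
  have hpow : b ^ n * b ^ (-(n : ℝ) + 1) = b := by
    rw [← Real.rpow_natCast, ← Real.rpow_add hb]; simp
  rw [mul_div_assoc', mul_assoc, mul_neg, hpow, show -(n : ℝ) + 1 = -((n : ℝ) - 1) by ring,
    mul_neg, neg_div_neg_eq]

theorem tendsto_integral_Ioi_abs_momentOp_sub (hf : Continuous f) {b : ℝ}
    (hb : 0 < b) (hvan : ∀ t, b < t → f t = 0) :
    Tendsto (fun n => ∫ s in Ioi b, |momentOp n f s - f s|) atTop (𝓝 0) := by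
  obtain ⟨M, hM⟩ := (isCompact_Icc : IsCompact (Icc 0 b)).exists_bound_of_continuousOn
    hf.continuousOn
  have hdecay : Tendsto (fun n : ℕ => M * b / ((n : ℝ) - 1)) atTop (𝓝 0) :=
    tendsto_const_nhds.div_atTop
      (tendsto_atTop_add_const_right _ (-1) tendsto_natCast_atTop_atTop)
  refine squeeze_zero' (Eventually.of_forall fun n => integral_nonneg fun s => abs_nonneg _) ?_
    hdecay
  filter_upwards [eventually_gt_atTop 1] with n hn
  have hn' : (0 : ℝ) < n - 1 := by
    have : (1 : ℝ) < n := by exact_mod_cast hn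
    linarith
  rw [integral_Ioi_abs_momentOp_sub hf hn hb hvan]
  gcongr
  exact abs_momentOp_le hf n hb hM

theorem tendsto_integral_abs_momentOp_sub (hf : Continuous f) {b : ℝ}
    (hb : 0 < b) (hvan : ∀ t, b < t → f t = 0) :
    Tendsto (fun n => ∫ s in Ioi 0, |momentOp n f s - f s|) atTop (𝓝 0) := by
  have hsplit : ∀ᶠ n in atTop, (∫ s in Ioc 0 b, |momentOp n f s - f s|) +
      ∫ s in Ioi b, |momentOp n f s - f s| = ∫ s in Ioi 0, |momentOp n f s - f s| := by
    filter_upwards [eventually_gt_atTop 1] with n hn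
    rw [← Ioc_union_Ioi_eq_Ioi hb.le, setIntegral_union (Ioc_disjoint_Ioi le_rfl)
      measurableSet_Ioi (integrableOn_Ioc_abs_momentOp_sub hf n b)
      (integrableOn_Ioi_abs_momentOp_sub hf hn hb hvan)]
  simpa using ((tendsto_integral_Ioc_abs_momentOp_sub hf b).add
    (tendsto_integral_Ioi_abs_momentOp_sub hf hb hvan)).congr' hsplit

theorem momentOp_L1_convergence_general
    (a b : ℝ)
    (f : ℝ → ℝ) (hcont : Continuous f)
    (hsupp : ∀ t : ℝ, t ∉ Set.Icc a b → f t = 0) :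
    Tendsto (fun n : ℕ => ∫ s in Set.Ioi (0 : ℝ), |momentOp n f s - f s|)
      atTop (nhds 0) :=
  tendsto_integral_abs_momentOp_sub hcont (b := max b 1) (by positivity) fun t ht =>
    hsupp t fun h => ((le_max_left b 1).trans_lt ht).not_ge h.2

/-- If `1 < a < b` and `f` is continuous and vanishes outside `[a,b]`, then
`∫₀^∞ |T_n f(s) − f(s)| ds → 0` as `n → ∞`. -/
theorem momentOp_L1_convergence
    (a b : ℝ) (ha : 1 < a) (hab : a < b)
    (f : ℝ → ℝ) (hcont : Continuous f)
    (hsupp : ∀ t : ℝ, t ∉ Set.Icc a b → f t = 0) :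
    Tendsto (fun n : ℕ => ∫ s in Set.Ioi (0 : ℝ), |momentOp n f s - f s|)
      atTop (nhds 0) :=
  momentOp_L1_convergence_general a b f hcont hsupp
end
end

section
/- Let 1 < a < T be reals, let f : ℝ → ℝ be a continuous function vanishing outside [a,T], and let w : ℝ → ℝ be continuously differentiable with compact support contained in [0,∞). Then lim_{n→∞} ∫₀^{+∞} T_n f(s)·w′(s) ds = ∫₀^{+∞} f(s)·w′(s) ds, and moreover lim_{n→∞} ∫₀^{+∞} w(s)·(T_n f)′(s) ds = −∫₀^{+∞} f(s)·w′(s) ds. -/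
/-!
Substituting `t = s v^{1/n}` gives `T_n f(s) = ∫₀¹ f(s v^{1/n}) dv`, so `|T_n f| ≤ sup |f|` and
`T_n f(s) → f(s)` for every `s ≠ 0`; dominated convergence gives the first limit. Since `f`
vanishes near `0`, so does `T_n f`, which is then `C¹` on all of `ℝ` with
`(T_n f)′(s) = (n/s)(f(s) - T_n f(s))`; integrating by parts against the compactly supported `w`
turns the second integral into the negative of the first.
-/

open MeasureTheory Filter

open Set Topology

theorem rpow_mem_Icc_zero_one {v p : ℝ} (hv : v ∈ Icc (0 : ℝ) 1) (hp : 0 ≤ p) :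
    v ^ p ∈ Icc (0 : ℝ) 1 :=
  ⟨Real.rpow_nonneg hv.1 p, Real.rpow_le_one hv.1 hv.2 hp⟩

namespace momentOp

variable {f : ℝ → ℝ} {n : ℕ} {s : ℝ}

theorem eq_integral_kernel (hs : s ≠ 0) :
    momentOp n f s = ∫ u in (0 : ℝ)..1, n * u ^ (n - 1) * f (s * u) := by
  rcases Nat.eq_zero_or_pos n with rfl | hn
  · simp [momentOp]
  have hscale : ∫ t in (0 : ℝ)..s, t ^ (n - 1) * f t
      = s ^ n * ∫ u in (0 : ℝ)..1, u ^ (n - 1) * f (s * u) := by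
    have := intervalIntegral.integral_comp_mul_left (fun t => t ^ (n - 1) * f t) hs
      (a := 0) (b := 1)
    simp only [mul_zero, mul_one, smul_eq_mul] at this
    rw [eq_inv_mul_iff_mul_eq₀ hs] at this
    simp only [mul_pow, mul_assoc, intervalIntegral.integral_const_mul] at this
    rw [← this, ← mul_assoc, ← pow_succ', Nat.sub_add_cancel hn]
  simp only [momentOp, hscale, mul_assoc, intervalIntegral.integral_const_mul]
  field_simp

theorem eq_integral_rpow (hf : Continuous f) (hn : n ≠ 0) (hs : s ≠ 0) :
    momentOp n f s = ∫ v in (0 : ℝ)..1, f (s * v ^ (n⁻¹ : ℝ)) := by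
  have hsubst := intervalIntegral.integral_comp_mul_deriv (a := 0) (b := 1)
    (f := fun u : ℝ => u ^ n) (f' := fun u => n * u ^ (n - 1))
    (g := fun v => f (s * v ^ (n⁻¹ : ℝ))) (fun u _ => hasDerivAt_pow n u) (by fun_prop)
    (hf.comp (continuous_const.mul (Real.continuous_rpow_const (by positivity))))
  simp only [zero_pow hn, one_pow] at hsubst
  rw [eq_integral_kernel hs, ← hsubst]
  refine intervalIntegral.integral_congr fun u hu => ?_
  rw [uIcc_of_le zero_le_one] at hu
  simp only [Function.comp, Real.pow_rpow_inv_natCast hu.1 hn]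
  ring

theorem norm_le (hf : Continuous f) (hn : n ≠ 0) (hs : s ≠ 0) {C : ℝ}
    (hC : ∀ θ ∈ Icc (0 : ℝ) 1, ‖f (s * θ)‖ ≤ C) : ‖momentOp n f s‖ ≤ C := by
  rw [eq_integral_rpow hf hn hs]
  refine (intervalIntegral.norm_integral_le_of_norm_le_const fun v hv => hC _ ?_).trans_eq
    (by simp)
  rw [uIoc_of_le zero_le_one] at hv
  exact rpow_mem_Icc_zero_one (Ioc_subset_Icc_self hv) (by positivity)

theorem tendsto_apply (hf : Continuous f) (hs : s ≠ 0) :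
    Tendsto (fun n => momentOp n f s) atTop (𝓝 (f s)) := by
  obtain ⟨C, hC⟩ := isCompact_Icc.exists_bound_of_continuousOn (s := Icc (0 : ℝ) 1)
    (hf.comp (continuous_const_mul s)).continuousOn
  have hlim : Tendsto (fun n : ℕ => ∫ v in (0 : ℝ)..1, f (s * v ^ (n⁻¹ : ℝ))) atTop
      (𝓝 (∫ _ in (0 : ℝ)..1, f s)) := by
    refine intervalIntegral.tendsto_integral_filter_of_dominated_convergence (fun _ => C)
      (Eventually.of_forall fun n => ?_) ?_ intervalIntegrable_const (ae_of_all _ fun v hv => ?_)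
    · exact (hf.comp (continuous_const.mul
        (Real.continuous_rpow_const (by positivity)))).aestronglyMeasurable
    · refine Eventually.of_forall fun n => ae_of_all _ fun v hv => hC _ ?_
      rw [uIoc_of_le zero_le_one] at hv
      exact rpow_mem_Icc_zero_one (Ioc_subset_Icc_self hv) (by positivity)
    · rw [uIoc_of_le zero_le_one] at hv
      have hroot : Tendsto (fun n : ℕ => v ^ (n⁻¹ : ℝ)) atTop (𝓝 1) := by
        simpa [Function.comp_def] using ((Real.continuousAt_const_rpow hv.1.ne').tendsto).comp
          (tendsto_inv_atTop_zero.comp tendsto_natCast_atTop_atTop)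
      simpa [Function.comp_def] using ((hf.comp (continuous_const_mul s)).tendsto 1).comp hroot
  simp only [intervalIntegral.integral_const, sub_zero, one_smul] at hlim
  refine hlim.congr' ?_
  filter_upwards [eventually_ne_atTop 0] with n hn
  exact (eq_integral_rpow hf hn hs).symm

theorem hasDerivAt (hf : Continuous f) (hs : s ≠ 0) :
    HasDerivAt (momentOp n f) (n / s * (f s - momentOp n f s)) s := by
  have hcont : Continuous fun t : ℝ => t ^ (n - 1) * f t := by fun_prop
  have hprim : HasDerivAt (fun x => ∫ t in (0 : ℝ)..x, t ^ (n - 1) * f t) (s ^ (n - 1) * f s) s :=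
    intervalIntegral.integral_hasDerivAt_right (hcont.intervalIntegrable _ _)
      (hcont.stronglyMeasurableAtFilter _ _) hcont.continuousAt
  refine (((hasDerivAt_const s (n : ℝ)).div (hasDerivAt_pow n s) (pow_ne_zero n hs)).mul
    hprim).congr_deriv ?_
  rcases Nat.eq_zero_or_pos n with rfl | hn
  · simp
  obtain ⟨m, rfl⟩ := Nat.exists_eq_add_of_le' hn
  simp only [momentOp, Nat.add_sub_cancel, Pi.div_apply]
  field_simp
  ring

theorem eventuallyEq_zero (hf0 : f =ᶠ[𝓝 0] 0) : momentOp n f =ᶠ[𝓝 0] 0 := by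
  obtain ⟨ε, hε, hfε⟩ := Metric.eventually_nhds_iff_ball.1 hf0
  filter_upwards [Metric.ball_mem_nhds 0 hε] with s hs
  have hsub : uIcc 0 s ⊆ Metric.ball 0 ε := by
    rw [Real.ball_eq_Ioo] at hs ⊢
    exact ordConnected_Ioo.uIcc_subset (by simpa using hε) hs
  have hint : ∫ t in (0 : ℝ)..s, t ^ (n - 1) * f t = 0 := by
    rw [intervalIntegral.integral_congr (g := 0) fun t ht => by simp [hfε t (hsub ht)]]
    simp
  simp [momentOp, hint]

theorem contDiff_one (hf : Continuous f) (hf0 : f =ᶠ[𝓝 0] 0) : ContDiff ℝ 1 (momentOp n f) := by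
  have hderiv : ∀ s, HasDerivAt (momentOp n f) (n / s * (f s - momentOp n f s)) s := by
    intro s
    rcases eq_or_ne s 0 with rfl | hs
    -- at `0` the formula is `n / 0 * _ = 0`, the derivative of a function vanishing near `0`
    · simpa using (hasDerivAt_const (0 : ℝ) (0 : ℝ)).congr_of_eventuallyEq (eventuallyEq_zero hf0)
    · exact hasDerivAt hf hs
  refine contDiff_one_iff_deriv.2 ⟨fun s => (hderiv s).differentiableAt, ?_⟩
  rw [funext fun s => (hderiv s).deriv, continuous_iff_continuousAt]
  intro s
  rcases eq_or_ne s 0 with rfl | hs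
  · refine (continuousAt_const (y := (0 : ℝ))).congr ?_
    filter_upwards [hf0, eventuallyEq_zero (n := n) hf0] with t hft hgt
    simp [hft, hgt]
  · exact (continuousAt_const.div continuousAt_id hs).mul
      (hf.continuousAt.sub (hasDerivAt hf hs).continuousAt)

theorem tendsto_setIntegral_mul (hf : Continuous f) {C : ℝ} (hC : ∀ t, ‖f t‖ ≤ C) {φ : ℝ → ℝ}
    (hφ : IntegrableOn φ (Ioi 0)) :
    Tendsto (fun n => ∫ s in Ioi 0, momentOp n f s * φ s) atTop
      (𝓝 (∫ s in Ioi 0, f s * φ s)) := by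
  refine tendsto_integral_filter_of_dominated_convergence (fun s => C * ‖φ s‖)
    (Eventually.of_forall fun n => ?_) ?_ (hφ.norm.const_mul C) ?_
  · refine ContinuousOn.aestronglyMeasurable (fun s hs => ?_) measurableSet_Ioi |>.mul
      hφ.aestronglyMeasurable
    exact (hasDerivAt hf (ne_of_gt hs)).continuousAt.continuousWithinAt
  · filter_upwards [eventually_ne_atTop 0] with n hn
    filter_upwards [ae_restrict_mem measurableSet_Ioi] with s hs
    rw [norm_mul]
    exact mul_le_mul_of_nonneg_right (norm_le hf hn (ne_of_gt hs) fun θ _ => hC _) (norm_nonneg _)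
  · filter_upwards [ae_restrict_mem measurableSet_Ioi] with s hs
    exact (tendsto_apply hf (ne_of_gt hs)).mul_const _

end momentOp

theorem integral_Ioi_mul_deriv_of_hasCompactSupport {u v : ℝ → ℝ} (hu : ContDiff ℝ 1 u)
    (hv : ContDiff ℝ 1 v) (hsupp : HasCompactSupport u) (a : ℝ) :
    ∫ x in Ioi a, u x * deriv v x = -(u a * v a) - ∫ x in Ioi a, deriv u x * v x := by
  rw [← zero_sub]
  exact integral_Ioi_mul_deriv_eq_deriv_mul
    (fun x _ => (hu.differentiable one_ne_zero x).hasDerivAt)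
    (fun x _ => (hv.differentiable one_ne_zero x).hasDerivAt)
    ((hu.continuous.mul (hv.continuous_deriv le_rfl)).integrable_of_hasCompactSupport
      hsupp.mul_right).integrableOn
    (((hu.continuous_deriv le_rfl).mul hv.continuous).integrable_of_hasCompactSupport
      hsupp.deriv.mul_right).integrableOn
    (((hu.continuous.mul hv.continuous).tendsto a).mono_left nhdsWithin_le_nhds)
    (hsupp.mul_right.is_zero_at_infty.mono_left atTop_le_cocompact)

theorem momentOp_weak_convergence_general
    (a T : ℝ) (ha : 1 < a)
    (f : ℝ → ℝ) (hcont : Continuous f)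
    (hsupp : ∀ t : ℝ, t ∉ Set.Icc a T → f t = 0)
    (w : ℝ → ℝ) (hw : ContDiff ℝ 1 w) (hwsupp : HasCompactSupport w) :
    Tendsto (fun n : ℕ => ∫ s in Set.Ioi (0 : ℝ), momentOp n f s * deriv w s)
      atTop (nhds (∫ s in Set.Ioi (0 : ℝ), f s * deriv w s)) ∧
    Tendsto (fun n : ℕ => ∫ s in Set.Ioi (0 : ℝ), w s * deriv (momentOp n f) s)
      atTop (nhds (-∫ s in Set.Ioi (0 : ℝ), f s * deriv w s)) := by
  have hf0 : f =ᶠ[𝓝 0] 0 := by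
    filter_upwards [Iio_mem_nhds (by linarith : (0 : ℝ) < a)] with t ht
    exact hsupp t fun h => (not_le.2 ht) h.1
  obtain ⟨C, hC⟩ := (HasCompactSupport.intro isCompact_Icc hsupp).exists_bound_of_continuous hcont
  have hweak := momentOp.tendsto_setIntegral_mul hcont hC
    ((hw.continuous_deriv le_rfl).integrable_of_hasCompactSupport hwsupp.deriv).integrableOn
  have hparts (n : ℕ) : ∫ s in Ioi 0, w s * deriv (momentOp n f) s
      = -∫ s in Ioi 0, momentOp n f s * deriv w s := by
    rw [integral_Ioi_mul_deriv_of_hasCompactSupport hw (momentOp.contDiff_one hcont hf0) hwsupp,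
      (momentOp.eventuallyEq_zero hf0).eq_of_nhds]
    simp [mul_comm]
  simpa only [hparts] using ⟨hweak, hweak.neg⟩

/-- Weak convergence of the derivatives `(T_n f)′`: if `1 < a < T`, `f` is continuous and
vanishes outside `[a,T]`, and `w` is `C¹` with compact support contained in `[0,∞)`, then
`∫₀^∞ T_n f(s) w′(s) ds → ∫₀^∞ f(s) w′(s) ds` and
`∫₀^∞ w(s) (T_n f)′(s) ds → −∫₀^∞ f(s) w′(s) ds`. -/
theorem momentOp_weak_convergence
    (a T : ℝ) (ha : 1 < a) (haT : a < T)
    (f : ℝ → ℝ) (hcont : Continuous f)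
    (hsupp : ∀ t : ℝ, t ∉ Set.Icc a T → f t = 0)
    (w : ℝ → ℝ) (hw : ContDiff ℝ 1 w) (hwsupp : HasCompactSupport w)
    (hwpos : tsupport w ⊆ Set.Ici (0 : ℝ)) :
    Tendsto (fun n : ℕ => ∫ s in Set.Ioi (0 : ℝ), momentOp n f s * deriv w s)
      atTop (nhds (∫ s in Set.Ioi (0 : ℝ), f s * deriv w s)) ∧
    Tendsto (fun n : ℕ => ∫ s in Set.Ioi (0 : ℝ), w s * deriv (momentOp n f) s)
      atTop (nhds (-∫ s in Set.Ioi (0 : ℝ), f s * deriv w s)) :=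
  momentOp_weak_convergence_general a T ha f hcont hsupp w hw hwsupp
end
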